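/- Let $r$ be a smooth positive function on an open set $U\subseteq\mathbb{C}$ with $r r_{2\bar 2} - |r_2|^2 - \tfrac14 r^4 = 0$, and suppose $u \equiv 0$ and $v \equiv 0$, $t_{\bar 2} = \tfrac14 r^2$. Then $F = r|z_1|^2 + t z_1^2 + \bar t\bar z_1^2$ satisfies both the complex Monge–Ampère equation $F_{1\bar1}F_{2\bar2} - |F_{1\bar2}|^2 = 0$ and the complex Monge equation with respect to $z_1$: $9F_{1111\bar1}(F_{1\bar1})^2 - 45 F_{111\bar1}F_{11\bar1}F_{1\bar1} + 40(F_{11\bar1})^3 = 0$. -/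

import Mathlib

open Complex

/-- Wirtinger derivative `∂/∂z` of a function `f : ℂ → ℂ` (viewed as a smooth map `ℝ² → ℂ`). -/
noncomputable def wd (f : ℂ → ℂ) (z : ℂ) : ℂ :=
  (1 / 2 : ℂ) * (fderiv ℝ f z 1 - Complex.I * fderiv ℝ f z Complex.I)

/-- Wirtinger derivative `∂/∂z̄` of a function `f : ℂ → ℂ`. -/
noncomputable def wdb (f : ℂ → ℂ) (z : ℂ) : ℂ :=
  (1 / 2 : ℂ) * (fderiv ℝ f z 1 + Complex.I * fderiv ℝ f z Complex.I)

/-- Partial Wirtinger derivative `∂/∂z₁` of `f : ℂ → ℂ → ℂ`. -/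
noncomputable def wd1 (f : ℂ → ℂ → ℂ) (z1 z2 : ℂ) : ℂ := wd (fun w => f w z2) z1

/-- Partial Wirtinger derivative `∂/∂z̄₁` of `f : ℂ → ℂ → ℂ`. -/
noncomputable def wd1b (f : ℂ → ℂ → ℂ) (z1 z2 : ℂ) : ℂ := wdb (fun w => f w z2) z1

/-- Partial Wirtinger derivative `∂/∂z₂` of `f : ℂ → ℂ → ℂ`. -/
noncomputable def wd2 (f : ℂ → ℂ → ℂ) (z1 z2 : ℂ) : ℂ := wd (fun w => f z1 w) z2

/-- Partial Wirtinger derivative `∂/∂z̄₂` of `f : ℂ → ℂ → ℂ`. -/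
noncomputable def wd2b (f : ℂ → ℂ → ℂ) (z1 z2 : ℂ) : ℂ := wdb (fun w => f z1 w) z2

section helpers

variable {f g : ℂ → ℂ} {z : ℂ}

lemma wd_congr (h : f =ᶠ[nhds z] g) : wd f z = wd g z := by
  unfold wd; rw [h.fderiv_eq]

lemma wdb_congr (h : f =ᶠ[nhds z] g) : wdb f z = wdb g z := by
  unfold wdb; rw [h.fderiv_eq]

lemma wd_const (c z : ℂ) : wd (fun _ => c) z = 0 := by
  simp [wd]

lemma wdb_const (c z : ℂ) : wdb (fun _ => c) z = 0 := by
  simp [wdb]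

lemma wd_id (z : ℂ) : wd (fun w => w) z = 1 := by
  simp [wd, fderiv_id']
  rw [Complex.ext_iff]; simp; norm_num

lemma wdb_id (z : ℂ) : wdb (fun w => w) z = 0 := by
  simp [wdb, fderiv_id']

lemma conj_hasFDerivAt (z : ℂ) :
    HasFDerivAt (fun w => (starRingEnd ℂ) w) (conjCLE.toContinuousLinearMap) z :=
  conjCLE.toContinuousLinearMap.hasFDerivAt

lemma differentiableAt_conj (z : ℂ) :
    DifferentiableAt ℝ (fun w => (starRingEnd ℂ) w) z :=
  (conj_hasFDerivAt z).differentiableAt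

lemma wd_conj (z : ℂ) : wd (fun w => (starRingEnd ℂ) w) z = 0 := by
  unfold wd
  rw [(conj_hasFDerivAt z).fderiv]
  simp

lemma wdb_conj (z : ℂ) : wdb (fun w => (starRingEnd ℂ) w) z = 1 := by
  unfold wdb
  rw [(conj_hasFDerivAt z).fderiv]
  simp
  rw [Complex.ext_iff]; simp; norm_num

lemma wd_add (hf : DifferentiableAt ℝ f z) (hg : DifferentiableAt ℝ g z) :
    wd (fun w => f w + g w) z = wd f z + wd g z := by
  unfold wd
  rw [fderiv_fun_add hf hg]
  simp [ContinuousLinearMap.add_apply]; ring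

lemma wdb_add (hf : DifferentiableAt ℝ f z) (hg : DifferentiableAt ℝ g z) :
    wdb (fun w => f w + g w) z = wdb f z + wdb g z := by
  unfold wdb
  rw [fderiv_fun_add hf hg]
  simp [ContinuousLinearMap.add_apply]; ring

lemma wd_mul (hf : DifferentiableAt ℝ f z) (hg : DifferentiableAt ℝ g z) :
    wd (fun w => f w * g w) z = wd f z * g z + f z * wd g z := by
  unfold wd
  rw [fderiv_fun_mul hf hg]
  simp [ContinuousLinearMap.add_apply, ContinuousLinearMap.smul_apply, smul_eq_mul]
  ring

lemma wdb_mul (hf : DifferentiableAt ℝ f z) (hg : DifferentiableAt ℝ g z) :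
    wdb (fun w => f w * g w) z = wdb f z * g z + f z * wdb g z := by
  unfold wdb
  rw [fderiv_fun_mul hf hg]
  simp [ContinuousLinearMap.add_apply, ContinuousLinearMap.smul_apply, smul_eq_mul]
  ring

lemma wd_const_mul (c : ℂ) (hf : DifferentiableAt ℝ f z) :
    wd (fun w => c * f w) z = c * wd f z := by
  rw [wd_mul (differentiableAt_const c) hf, wd_const]; ring

lemma wdb_const_mul (c : ℂ) (hf : DifferentiableAt ℝ f z) :
    wdb (fun w => c * f w) z = c * wdb f z := by
  rw [wdb_mul (differentiableAt_const c) hf, wdb_const]; ring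

lemma wd_conj_comp (hf : DifferentiableAt ℝ f z) :
    wd (fun w => (starRingEnd ℂ) (f w)) z = (starRingEnd ℂ) (wdb f z) := by
  have h : HasFDerivAt (fun w => (starRingEnd ℂ) (f w))
      (conjCLE.toContinuousLinearMap.comp (fderiv ℝ f z)) z :=
    (conj_hasFDerivAt (f z)).comp z hf.hasFDerivAt
  unfold wd wdb
  rw [h.fderiv]
  simp [ContinuousLinearMap.comp_apply, map_add, map_mul, map_sub, map_ofNat, Complex.conj_I]
  ring

lemma wdb_conj_comp (hf : DifferentiableAt ℝ f z) :
    wdb (fun w => (starRingEnd ℂ) (f w)) z = (starRingEnd ℂ) (wd f z) := by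
  have h : HasFDerivAt (fun w => (starRingEnd ℂ) (f w))
      (conjCLE.toContinuousLinearMap.comp (fderiv ℝ f z)) z :=
    (conj_hasFDerivAt (f z)).comp z hf.hasFDerivAt
  unfold wd wdb
  rw [h.fderiv]
  simp [ContinuousLinearMap.comp_apply, map_add, map_mul, map_sub, map_ofNat, Complex.conj_I]

lemma hasFDerivAt_fderiv_apply (h : DifferentiableAt ℝ (fderiv ℝ f) z) (v : ℂ) :
    HasFDerivAt (fun w => fderiv ℝ f w v)
      ((ContinuousLinearMap.apply ℝ ℂ v).comp (fderiv ℝ (fderiv ℝ f) z)) z :=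
  (ContinuousLinearMap.apply ℝ ℂ v).hasFDerivAt.comp z h.hasFDerivAt

lemma differentiableAt_wd (h : DifferentiableAt ℝ (fderiv ℝ f) z) :
    DifferentiableAt ℝ (wd f) z := by
  unfold wd
  exact (((hasFDerivAt_fderiv_apply h 1).differentiableAt).sub
    (((hasFDerivAt_fderiv_apply h Complex.I).differentiableAt).const_mul Complex.I)).const_mul _

lemma differentiableAt_wdb (h : DifferentiableAt ℝ (fderiv ℝ f) z) :
    DifferentiableAt ℝ (wdb f) z := by
  unfold wdb
  exact (((hasFDerivAt_fderiv_apply h 1).differentiableAt).add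
    (((hasFDerivAt_fderiv_apply h Complex.I).differentiableAt).const_mul Complex.I)).const_mul _

lemma wdb_wd_comm (hf : ContDiffAt ℝ 2 f z) : wdb (wd f) z = wd (wdb f) z := by
  have hd : DifferentiableAt ℝ (fderiv ℝ f) z :=
    (hf.fderiv_right (m := 1) (le_refl 2)).differentiableAt one_ne_zero
  have hsymm := hf.isSymmSndFDerivAt (by simp)
  set D2 := fderiv ℝ (fderiv ℝ f) z with hD2
  have h1 : HasFDerivAt
      (fun w => (1/2 : ℂ) * (fderiv ℝ f w 1 - Complex.I * fderiv ℝ f w Complex.I))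
      ((1/2 : ℂ) • (((ContinuousLinearMap.apply ℝ ℂ 1).comp D2)
        - Complex.I • ((ContinuousLinearMap.apply ℝ ℂ Complex.I).comp D2))) z :=
    ((hasFDerivAt_fderiv_apply hd 1).sub
      ((hasFDerivAt_fderiv_apply hd Complex.I).const_mul Complex.I)).const_mul (1/2 : ℂ)
  have h2 : HasFDerivAt
      (fun w => (1/2 : ℂ) * (fderiv ℝ f w 1 + Complex.I * fderiv ℝ f w Complex.I))
      ((1/2 : ℂ) • (((ContinuousLinearMap.apply ℝ ℂ 1).comp D2)
        + Complex.I • ((ContinuousLinearMap.apply ℝ ℂ Complex.I).comp D2))) z :=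
    ((hasFDerivAt_fderiv_apply hd 1).add
      ((hasFDerivAt_fderiv_apply hd Complex.I).const_mul Complex.I)).const_mul (1/2 : ℂ)
  unfold wdb wd
  rw [h1.fderiv, h2.fderiv]
  simp only [ContinuousLinearMap.smul_apply, ContinuousLinearMap.sub_apply,
    ContinuousLinearMap.add_apply, ContinuousLinearMap.comp_apply,
    ContinuousLinearMap.apply_apply, smul_eq_mul]
  rw [hsymm 1 Complex.I]
  ring

lemma wd_quad (A B C z : ℂ) :
    wd (fun w => A * (w * (starRingEnd ℂ) w) + B * (w * w)
      + C * ((starRingEnd ℂ) w * (starRingEnd ℂ) w)) z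
    = A * (starRingEnd ℂ) z + 2 * B * z := by
  have hid : DifferentiableAt ℝ (fun w : ℂ => w) z := differentiableAt_fun_id
  have hc := differentiableAt_conj z
  rw [wd_add (((differentiableAt_const A).fun_mul (hid.fun_mul hc)).fun_add
      ((differentiableAt_const B).fun_mul (hid.fun_mul hid)))
      ((differentiableAt_const C).fun_mul (hc.fun_mul hc)),
    wd_add ((differentiableAt_const A).fun_mul (hid.fun_mul hc))
      ((differentiableAt_const B).fun_mul (hid.fun_mul hid)),
    wd_const_mul A (hid.fun_mul hc), wd_const_mul B (hid.fun_mul hid), wd_const_mul C (hc.fun_mul hc),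
    wd_mul hid hc, wd_mul hid hid, wd_mul hc hc, wd_id, wd_conj]
  ring

end helpers

/-- with `u = v = 0`, `t_{2̄} = r²/4` and the curvature equation for `r`,
`F = r|z₁|² + t z₁² + t̄ z̄₁²` satisfies both the complex Monge–Ampère equation and the
complex Monge equation w.r.t. `z₁`. -/
theorem stmt14 (U : Set ℂ) (hU : IsOpen U) (h0 : (0 : ℂ) ∈ U)
    (r : ℂ → ℝ) (t : ℂ → ℂ)
    (hr : ContDiffOn ℝ (⊤ : ℕ∞) (fun z => (r z : ℂ)) U)
    (hpos : ∀ z ∈ U, 0 < r z)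
    (ht : ContDiffOn ℝ (⊤ : ℕ∞) t U)
    (hreq : ∀ z ∈ U,
      (r z : ℂ) * wdb (wd (fun w => (r w : ℂ))) z
        - (Complex.normSq (wd (fun w => (r w : ℂ)) z) : ℂ)
        - (1 / 4 : ℂ) * (r z : ℂ) ^ 4 = 0)
    (hteq : ∀ z ∈ U, wdb t z = (1 / 4 : ℂ) * (r z : ℂ) ^ 2)
    (F : ℂ → ℂ → ℂ)
    (hF : ∀ z1 z2 : ℂ,
      F z1 z2 = (r z2 : ℂ) * (Complex.normSq z1 : ℂ)
        + t z2 * z1 ^ 2 + starRingEnd ℂ (t z2) * (starRingEnd ℂ z1) ^ 2) :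
    ∀ z1 : ℂ, ∀ z2 ∈ U,
      (wd1b (wd1 F) z1 z2 * wd2b (wd2 F) z1 z2
        - (Complex.normSq (wd2b (wd1 F) z1 z2) : ℂ) = 0) ∧
      (9 * wd1 (wd1 (wd1 (wd1b (wd1 F)))) z1 z2 * (wd1b (wd1 F) z1 z2) ^ 2
        - 45 * wd1 (wd1 (wd1b (wd1 F))) z1 z2 * wd1 (wd1b (wd1 F)) z1 z2
            * wd1b (wd1 F) z1 z2
        + 40 * (wd1 (wd1b (wd1 F)) z1 z2) ^ 3 = 0) := by
  intro z1 z2 hz2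
  set rr : ℂ → ℂ := fun w => ((r w : ℂ)) with hrr
  -- slice in z1 is an explicit quadratic
  have hF1 : ∀ b : ℂ, (fun w => F w b)
      = fun w => (rr b) * (w * (starRingEnd ℂ) w) + t b * (w * w)
        + (starRingEnd ℂ) (t b) * ((starRingEnd ℂ) w * (starRingEnd ℂ) w) := by
    intro b; funext w
    rw [hF w b, ← Complex.mul_conj]
    ring
  have hwd1F : ∀ a b : ℂ, wd1 F a b = rr b * (starRingEnd ℂ) a + 2 * t b * a := by
    intro a b
    unfold wd1
    rw [hF1 b, wd_quad]
  have hwd1bF : ∀ a b : ℂ, wd1b (wd1 F) a b = rr b := by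
    intro a b
    unfold wd1b
    have he : (fun w => wd1 F w b)
        = fun w => rr b * ((starRingEnd ℂ) w) + (2 * t b) * w := by
      funext w; rw [hwd1F w b]
    rw [he, wdb_add ((differentiableAt_const _).fun_mul (differentiableAt_conj _))
      ((differentiableAt_const _).fun_mul differentiableAt_fun_id),
      wdb_const_mul _ (differentiableAt_conj _), wdb_const_mul _ differentiableAt_fun_id,
      wdb_conj, wdb_id]
    ring
  -- Monge equation part: all higher z1-derivatives vanish
  have m1 : ∀ a b : ℂ, wd1 (wd1b (wd1 F)) a b = 0 := by
    intro a b
    have he : (fun w => wd1b (wd1 F) w b) = fun _ => rr b := by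
      funext w; exact hwd1bF w b
    show wd (fun w => wd1b (wd1 F) w b) a = 0
    rw [he, wd_const]
  have m2 : ∀ a b : ℂ, wd1 (wd1 (wd1b (wd1 F))) a b = 0 := by
    intro a b
    have he : (fun w => wd1 (wd1b (wd1 F)) w b) = fun _ => (0 : ℂ) := by
      funext w; exact m1 w b
    show wd (fun w => wd1 (wd1b (wd1 F)) w b) a = 0
    rw [he, wd_const]
  have m3 : ∀ a b : ℂ, wd1 (wd1 (wd1 (wd1b (wd1 F)))) a b = 0 := by
    intro a b
    have he : (fun w => wd1 (wd1 (wd1b (wd1 F))) w b) = fun _ => (0 : ℂ) := by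
      funext w; exact m2 w b
    show wd (fun w => wd1 (wd1 (wd1b (wd1 F))) w b) a = 0
    rw [he, wd_const]
  constructor
  · -- Monge–Ampère equation
    have hUn : U ∈ nhds z2 := hU.mem_nhds hz2
    have hrCa : ContDiffAt ℝ (⊤ : ℕ∞) rr z2 := hr.contDiffAt hUn
    have htCa : ContDiffAt ℝ (⊤ : ℕ∞) t z2 := ht.contDiffAt hUn
    have hrd : DifferentiableAt ℝ rr z2 := hrCa.differentiableAt (by simp)
    have htd : DifferentiableAt ℝ t z2 := htCa.differentiableAt (by simp)
    have hrd2 : DifferentiableAt ℝ (fderiv ℝ rr) z2 :=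
      (hrCa.fderiv_right (m := 1) (by exact_mod_cast ENat.LEInfty.out)).differentiableAt one_ne_zero
    have htd2 : DifferentiableAt ℝ (fderiv ℝ t) z2 :=
      (htCa.fderiv_right (m := 1) (by exact_mod_cast ENat.LEInfty.out)).differentiableAt one_ne_zero
    set R2 := wd rr z2 with hR2
    -- wdb of rr is conj of wd of rr
    have hwdb_rr : ∀ w : ℂ, DifferentiableAt ℝ rr w →
        wdb rr w = (starRingEnd ℂ) (wd rr w) := by
      intro w hw
      have he : rr = fun y => (starRingEnd ℂ) (rr y) := by
        funext y; simp [hrr, Complex.conj_ofReal]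
      conv_lhs => rw [he]
      exact wdb_conj_comp hw
    -- F_{1 2̄}
    have hF12 : wd2b (wd1 F) z1 z2
        = (starRingEnd ℂ) z1 * (starRingEnd ℂ) R2 + (2 * z1) * ((1/4 : ℂ) * rr z2 ^ 2) := by
      unfold wd2b
      have he : (fun w => wd1 F z1 w)
          = fun w => (starRingEnd ℂ) z1 * rr w + (2 * z1) * t w := by
        funext w; rw [hwd1F z1 w]; ring
      rw [he, wdb_add ((differentiableAt_const _).fun_mul hrd)
          ((differentiableAt_const _).fun_mul htd),
        wdb_const_mul _ hrd, wdb_const_mul _ htd, hwdb_rr z2 hrd, hteq z2 hz2]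
    -- wd (wdb t) = (1/2) rr * R2
    have hwdwdbt : wd (wdb t) z2 = (1/2 : ℂ) * rr z2 * R2 := by
      have he : wdb t =ᶠ[nhds z2] fun w => (1/4 : ℂ) * (rr w * rr w) := by
        filter_upwards [hUn] with w hw
        rw [hteq w hw]; ring
      rw [wd_congr he, wd_const_mul _ (hrd.fun_mul hrd), wd_mul hrd hrd]
      ring
    -- differentiability at points of U
    have hrdU : ∀ w ∈ U, DifferentiableAt ℝ rr w := fun w hw =>
      (hr.contDiffAt (hU.mem_nhds hw)).differentiableAt (by simp)
    have htdU : ∀ w ∈ U, DifferentiableAt ℝ t w := fun w hw =>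
      (ht.contDiffAt (hU.mem_nhds hw)).differentiableAt (by simp)
    -- F_{2 2̄}
    have hwd2F : ∀ w ∈ U, wd2 F z1 w
        = (z1 * (starRingEnd ℂ) z1) * wd rr w
          + ((z1 * z1) * wd t w
            + ((starRingEnd ℂ) z1 * (starRingEnd ℂ) z1)
              * ((fun y => (starRingEnd ℂ) (wdb t y)) w)) := by
      intro w hw
      unfold wd2
      have he : (fun y => F z1 y)
          = fun y => (z1 * (starRingEnd ℂ) z1) * rr y
            + ((z1 * z1) * t y
              + ((starRingEnd ℂ) z1 * (starRingEnd ℂ) z1) * ((starRingEnd ℂ) (t y))) := by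
        funext y
        rw [hF z1 y, ← Complex.mul_conj]
        ring
      have htw := htdU w hw
      have hconjt : DifferentiableAt ℝ (fun y => (starRingEnd ℂ) (t y)) w :=
        (differentiableAt_conj (t w)).comp w htw
      rw [he, wd_add ((differentiableAt_const _).fun_mul (hrdU w hw))
          (((differentiableAt_const _).fun_mul htw).fun_add ((differentiableAt_const _).fun_mul hconjt)),
        wd_add ((differentiableAt_const _).fun_mul htw) ((differentiableAt_const _).fun_mul hconjt),
        wd_const_mul _ (hrdU w hw), wd_const_mul _ htw, wd_const_mul _ hconjt,
        wd_conj_comp htw]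
    have hF22 : wd2b (wd2 F) z1 z2
        = (z1 * (starRingEnd ℂ) z1) * wdb (wd rr) z2
          + ((z1 * z1) * ((1/2 : ℂ) * rr z2 * R2)
            + ((starRingEnd ℂ) z1 * (starRingEnd ℂ) z1)
              * ((1/2 : ℂ) * rr z2 * (starRingEnd ℂ) R2)) := by
      unfold wd2b
      have he : (fun w => wd2 F z1 w) =ᶠ[nhds z2]
          fun w => (z1 * (starRingEnd ℂ) z1) * wd rr w
            + ((z1 * z1) * wd t w
              + ((starRingEnd ℂ) z1 * (starRingEnd ℂ) z1)
                * ((fun y => (starRingEnd ℂ) (wdb t y)) w)) := by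
        filter_upwards [hUn] with w hw
        exact hwd2F w hw
      have hwdr : DifferentiableAt ℝ (wd rr) z2 := differentiableAt_wd hrd2
      have hwdt : DifferentiableAt ℝ (wd t) z2 := differentiableAt_wd htd2
      have hwdbt : DifferentiableAt ℝ (wdb t) z2 := differentiableAt_wdb htd2
      have hconjwdbt : DifferentiableAt ℝ (fun y => (starRingEnd ℂ) (wdb t y)) z2 :=
        (differentiableAt_conj (wdb t z2)).comp z2 hwdbt
      rw [wdb_congr he,
        wdb_add ((differentiableAt_const _).fun_mul hwdr)
          (((differentiableAt_const _).fun_mul hwdt).fun_add ((differentiableAt_const _).fun_mul hconjwdbt)),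
        wdb_add ((differentiableAt_const _).fun_mul hwdt) ((differentiableAt_const _).fun_mul hconjwdbt),
        wdb_const_mul _ hwdr, wdb_const_mul _ hwdt, wdb_const_mul _ hconjwdbt,
        wdb_conj_comp hwdbt,
        wdb_wd_comm (htCa.of_le (by exact WithTop.coe_le_coe.mpr le_top)), hwdwdbt]
      have hc2 : (starRingEnd ℂ) ((1/2 : ℂ) * rr z2 * R2)
          = (1/2 : ℂ) * rr z2 * (starRingEnd ℂ) R2 := by
        simp [hrr, map_mul, map_div₀, map_one, map_ofNat, Complex.conj_ofReal]
      rw [hc2]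
    have hreq' := hreq z2 hz2
    rw [← Complex.mul_conj] at hreq'
    rw [hwd1bF z1 z2, hF22, hF12, ← Complex.mul_conj]
    rw [map_add, map_mul, map_mul, map_mul, map_mul, Complex.conj_conj, Complex.conj_conj,
      map_pow, Complex.conj_ofReal]
    have hco : ((starRingEnd ℂ) (2 : ℂ)) = 2 := by
      simp [map_ofNat]
    have hcq : ((starRingEnd ℂ) ((1:ℂ)/4)) = 1/4 := by
      rw [map_div₀, map_one, map_ofNat]
    rw [hco, hcq]
    linear_combination (z1 * (starRingEnd ℂ) z1) * hreq'
  · -- Monge equation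
    rw [m1 z1 z2, m2 z1 z2, m3 z1 z2]
    ring
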